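/- arXiv:2406.08526 — 3 statements merged into one kernel-verified Lean document; each statement's English description precedes it below -/
import Mathlib

section
/- Let d_k > 0, s_k > 0, δ > 0, 0 < θ < 1 and 0 < λ_k < λ be real numbers; define U_k^L(r) = r·d_k·(1 − λ_k/λ) − d_k·s_k, U_k^A(r) = r·d_k·(1 − θ·λ_k/λ) − d_k·s_k − d_k·δ·λ_k, ζ1(k) = λ·s_k/(λ − λ_k), and ζ3 = λ·δ/(1 − θ). Suppose client k is type-1, i.e., ζ1(k) ≤ ζ3. Then for every real r: (a) if r < ζ1(k) then U_k^L(r) < 0 and U_k^A(r) < 0, so not participating (utility 0) is strictly optimal; (b) if ζ1(k) ≤ r < ζ3 then U_k^L(r) ≥ 0 and U_k^A(r) < U_k^L(r), so participating with the local dataset is optimal; (c) if r ≥ ζ3 then U_k^A(r) ≥ U_k^L(r) and U_k^A(r) ≥ 0, so participating with the AIGC-enhanced dataset is optimal. -/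
/-!
Both utilities are affine in `r`. Factoring them as
`U_L(r) = d_k (1 - λ_k/λ) (r - ζ1)` and `U_A(r) - U_L(r) = d_k λ_k (1 - θ)/λ · (r - ζ3)`,
with positive slopes, the signs of `U_L` and of `U_A - U_L` change exactly at `ζ1` and at `ζ3`;
the type-1 condition `ζ1 ≤ ζ3` orders the two thresholds.
-/

section ClientUtility

variable {d s lk l θ δ r : ℝ}

theorem localUtility_eq_mul_sub_threshold (hl : l ≠ 0) (hlk : l - lk ≠ 0) :
    r * d * (1 - lk / l) - d * s = d * (1 - lk / l) * (r - l * s / (l - lk)) := by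
  field_simp

theorem aigcUtility_sub_localUtility (hl : l ≠ 0) (hθ : 1 - θ ≠ 0) :
    (r * d * (1 - θ * lk / l) - d * s - d * δ * lk) - (r * d * (1 - lk / l) - d * s) =
      d * lk * (1 - θ) / l * (r - l * δ / (1 - θ)) := by
  field_simp
  ring

end ClientUtility

theorem type1_client_behavior_general
    (dk sk lamk lam θ δ : ℝ) (hd : 0 < dk)
    (hθ1 : θ < 1) (hlk : 0 < lamk) (hlt : lamk < lam)
    (htype1 : lam * sk / (lam - lamk) ≤ lam * δ / (1 - θ)) :
    ∀ r : ℝ,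
      (r < lam * sk / (lam - lamk) →
          r * dk * (1 - lamk / lam) - dk * sk < 0 ∧
          r * dk * (1 - θ * lamk / lam) - dk * sk - dk * δ * lamk < 0) ∧
      (lam * sk / (lam - lamk) ≤ r → r < lam * δ / (1 - θ) →
          0 ≤ r * dk * (1 - lamk / lam) - dk * sk ∧
          r * dk * (1 - θ * lamk / lam) - dk * sk - dk * δ * lamk <
            r * dk * (1 - lamk / lam) - dk * sk) ∧
      (lam * δ / (1 - θ) ≤ r →
          r * dk * (1 - lamk / lam) - dk * sk ≤
            r * dk * (1 - θ * lamk / lam) - dk * sk - dk * δ * lamk ∧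
          0 ≤ r * dk * (1 - θ * lamk / lam) - dk * sk - dk * δ * lamk) := by
  intro r
  have hl : 0 < lam := hlk.trans hlt
  have hgap : 0 < lam - lamk := sub_pos.2 hlt
  have hθ : 0 < 1 - θ := sub_pos.2 hθ1
  have slopeL : 0 < dk * (1 - lamk / lam) :=
    mul_pos hd (sub_pos.2 ((div_lt_one hl).2 hlt))
  have slopeA : 0 < dk * lamk * (1 - θ) / lam := by positivity
  have eqL := localUtility_eq_mul_sub_threshold (d := dk) (s := sk) (r := r) hl.ne' hgap.ne'
  have eqA := aigcUtility_sub_localUtility (d := dk) (s := sk) (δ := δ) (r := r) (lk := lamk)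
    hl.ne' hθ.ne'
  refine ⟨fun h => ?_, fun h1 h2 => ?_, fun h => ?_⟩
  · have hL := mul_neg_of_pos_of_neg slopeL (sub_neg.2 h)
    have hA := mul_neg_of_pos_of_neg slopeA (sub_neg.2 (h.trans_le htype1))
    constructor <;> linarith
  · have hL := mul_nonneg slopeL.le (sub_nonneg.2 h1)
    have hA := mul_neg_of_pos_of_neg slopeA (sub_neg.2 h2)
    constructor <;> linarith
  · have hL := mul_nonneg slopeL.le (sub_nonneg.2 (htype1.trans h))
    have hA := mul_nonneg slopeA.le (sub_nonneg.2 h)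
    constructor <;> linarith

/-- rational behavior of a type-1 client (`ζ1(k) ≤ ζ3`). -/
theorem type1_client_behavior
    (dk sk lamk lam θ δ : ℝ) (hd : 0 < dk) (hs : 0 < sk) (hδ : 0 < δ)
    (hθ0 : 0 < θ) (hθ1 : θ < 1) (hlk : 0 < lamk) (hlt : lamk < lam)
    (htype1 : lam * sk / (lam - lamk) ≤ lam * δ / (1 - θ)) :
    ∀ r : ℝ,
      (r < lam * sk / (lam - lamk) →
          r * dk * (1 - lamk / lam) - dk * sk < 0 ∧
          r * dk * (1 - θ * lamk / lam) - dk * sk - dk * δ * lamk < 0) ∧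
      (lam * sk / (lam - lamk) ≤ r → r < lam * δ / (1 - θ) →
          0 ≤ r * dk * (1 - lamk / lam) - dk * sk ∧
          r * dk * (1 - θ * lamk / lam) - dk * sk - dk * δ * lamk <
            r * dk * (1 - lamk / lam) - dk * sk) ∧
      (lam * δ / (1 - θ) ≤ r →
          r * dk * (1 - lamk / lam) - dk * sk ≤
            r * dk * (1 - θ * lamk / lam) - dk * sk - dk * δ * lamk ∧
          0 ≤ r * dk * (1 - θ * lamk / lam) - dk * sk - dk * δ * lamk) :=
  type1_client_behavior_general dk sk lamk lam θ δ hd hθ1 hlk hlt htype1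
end

section
/- Let d_k > 0, s_k > 0, δ > 0, 0 < θ < 1 and 0 < λ_k < λ be real numbers; define U_k^L(r) = r·d_k·(1 − λ_k/λ) − d_k·s_k, U_k^A(r) = r·d_k·(1 − θ·λ_k/λ) − d_k·s_k − d_k·δ·λ_k, ζ1(k) = λ·s_k/(λ − λ_k), ζ2(k) = (λ·s_k + λ·δ·λ_k)/(λ − θ·λ_k), and ζ3 = λ·δ/(1 − θ). Suppose client k is type-2, i.e., ζ3 < ζ1(k). Then for every real r: (a) if r < ζ2(k) then U_k^L(r) < 0 and U_k^A(r) < 0, so not participating (utility 0) is strictly optimal; (b) if r ≥ ζ2(k) then U_k^A(r) ≥ 0 and U_k^A(r) ≥ U_k^L(r), so participating with the AIGC-enhanced dataset is optimal. -/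
/-!
Each utility is affine in `r` with positive slope, so its sign is that of `r` minus its root:
`U^L` vanishes at `ζ1`, `U^A` at `ζ2`, and `U^A - U^L` (slope `d_k λ_k (1 - θ) / λ`) at `ζ3`.
Writing `λ - θ λ_k = (λ - λ_k) + (1 - θ) λ_k`, the threshold `ζ2` is the mediant of
`ζ1 = λ s_k / (λ - λ_k)` and `ζ3 = λ δ λ_k / ((1 - θ) λ_k)`, hence lies strictly between them
when `ζ3 < ζ1`. Below `ζ2` both utilities are negative since `r < ζ2 < ζ1`; from `ζ2` on,
`U^A ≥ 0` and `r > ζ3` makes `U^A ≥ U^L`.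
-/

section Mediant

variable {α : Type*} [Field α] [LinearOrder α] [IsStrictOrderedRing α] {a b c d : α}

theorem div_lt_add_div_add_of_div_lt_div (hb : 0 < b) (hd : 0 < d) (h : a / b < c / d) :
    a / b < (a + c) / (b + d) := by
  rw [div_lt_div_iff₀ hb hd] at h
  rw [div_lt_div_iff₀ hb (add_pos hb hd)]
  linarith

theorem add_div_add_lt_div_of_div_lt_div (hb : 0 < b) (hd : 0 < d) (h : a / b < c / d) :
    (a + c) / (b + d) < c / d := by
  rw [div_lt_div_iff₀ hb hd] at h
  rw [div_lt_div_iff₀ (add_pos hb hd) hd]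
  linarith

end Mediant

section ClientUtility

variable {dk sk lamk lam θ δ r : ℝ}

theorem localUtility_nonneg_iff (hd : 0 < dk) (hlam : 0 < lam) (hlt : lamk < lam) :
    0 ≤ r * dk * (1 - lamk / lam) - dk * sk ↔ lam * sk / (lam - lamk) ≤ r := by
  have ha : 0 < lam - lamk := sub_pos.2 hlt
  have hU : r * dk * (1 - lamk / lam) - dk * sk
      = dk * (lam - lamk) / lam * (r - lam * sk / (lam - lamk)) := by
    field_simp
  rw [hU, mul_nonneg_iff_of_pos_left (by positivity), sub_nonneg]

theorem aigcUtility_nonneg_iff (hd : 0 < dk) (hlam : 0 < lam) (hb : 0 < lam - θ * lamk) :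
    0 ≤ r * dk * (1 - θ * lamk / lam) - dk * sk - dk * δ * lamk ↔
      (lam * sk + lam * δ * lamk) / (lam - θ * lamk) ≤ r := by
  have hU : r * dk * (1 - θ * lamk / lam) - dk * sk - dk * δ * lamk
      = dk * (lam - θ * lamk) / lam * (r - (lam * sk + lam * δ * lamk) / (lam - θ * lamk)) := by
    field_simp
    ring
  rw [hU, mul_nonneg_iff_of_pos_left (by positivity), sub_nonneg]

theorem localUtility_le_aigcUtility_iff (hd : 0 < dk) (hlk : 0 < lamk) (hlam : 0 < lam)
    (hθ1 : θ < 1) :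
    r * dk * (1 - lamk / lam) - dk * sk ≤
        r * dk * (1 - θ * lamk / lam) - dk * sk - dk * δ * lamk ↔
      lam * δ / (1 - θ) ≤ r := by
  have hc : 0 < 1 - θ := sub_pos.2 hθ1
  have hU : (r * dk * (1 - θ * lamk / lam) - dk * sk - dk * δ * lamk) -
        (r * dk * (1 - lamk / lam) - dk * sk)
      = dk * lamk * (1 - θ) / lam * (r - lam * δ / (1 - θ)) := by
    field_simp
    ring
  rw [← sub_nonneg, hU, mul_nonneg_iff_of_pos_left (by positivity), sub_nonneg]

theorem aigcThreshold_mem_Ioo (hθ1 : θ < 1) (hlk : 0 < lamk) (hlt : lamk < lam)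
    (htype2 : lam * δ / (1 - θ) < lam * sk / (lam - lamk)) :
    (lam * sk + lam * δ * lamk) / (lam - θ * lamk) ∈
      Set.Ioo (lam * δ / (1 - θ)) (lam * sk / (lam - lamk)) := by
  have hb : 0 < (1 - θ) * lamk := mul_pos (sub_pos.2 hθ1) hlk
  have hd : 0 < lam - lamk := sub_pos.2 hlt
  have hζ3 : lam * δ / (1 - θ) = lam * δ * lamk / ((1 - θ) * lamk) :=
    (mul_div_mul_right _ _ hlk.ne').symm
  have hζ2 : (lam * sk + lam * δ * lamk) / (lam - θ * lamk)
      = (lam * δ * lamk + lam * sk) / ((1 - θ) * lamk + (lam - lamk)) := by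
    ring
  rw [hζ3] at htype2 ⊢
  rw [hζ2]
  exact ⟨div_lt_add_div_add_of_div_lt_div hb hd htype2,
    add_div_add_lt_div_of_div_lt_div hb hd htype2⟩

end ClientUtility

theorem type2_client_behavior_general
    (dk sk lamk lam θ δ : ℝ) (hd : 0 < dk)
    (hθ1 : θ < 1) (hlk : 0 < lamk) (hlt : lamk < lam)
    (htype2 : lam * δ / (1 - θ) < lam * sk / (lam - lamk)) :
    ∀ r : ℝ,
      (r < (lam * sk + lam * δ * lamk) / (lam - θ * lamk) →
          r * dk * (1 - lamk / lam) - dk * sk < 0 ∧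
          r * dk * (1 - θ * lamk / lam) - dk * sk - dk * δ * lamk < 0) ∧
      ((lam * sk + lam * δ * lamk) / (lam - θ * lamk) ≤ r →
          0 ≤ r * dk * (1 - θ * lamk / lam) - dk * sk - dk * δ * lamk ∧
          r * dk * (1 - lamk / lam) - dk * sk ≤
            r * dk * (1 - θ * lamk / lam) - dk * sk - dk * δ * lamk) := by
  intro r
  have hlam : 0 < lam := hlk.trans hlt
  have hb : 0 < lam - θ * lamk := by nlinarith
  obtain ⟨hζ3_lt_ζ2, hζ2_lt_ζ1⟩ := aigcThreshold_mem_Ioo hθ1 hlk hlt htype2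
  have hL := localUtility_nonneg_iff (r := r) (sk := sk) hd hlam hlt
  have hA := aigcUtility_nonneg_iff (r := r) (sk := sk) (δ := δ) hd hlam hb
  refine ⟨fun hr => ⟨?_, ?_⟩, fun hr => ⟨hA.2 hr, ?_⟩⟩
  · exact not_le.1 (mt hL.1 (hr.trans hζ2_lt_ζ1).not_ge)
  · exact not_le.1 (mt hA.1 hr.not_ge)
  · exact (localUtility_le_aigcUtility_iff hd hlk hlam hθ1).2 (hζ3_lt_ζ2.trans_le hr).le

/-- rational behavior of a type-2 client (`ζ3 < ζ1(k)`). -/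
theorem type2_client_behavior
    (dk sk lamk lam θ δ : ℝ) (hd : 0 < dk) (hs : 0 < sk) (hδ : 0 < δ)
    (hθ0 : 0 < θ) (hθ1 : θ < 1) (hlk : 0 < lamk) (hlt : lamk < lam)
    (htype2 : lam * δ / (1 - θ) < lam * sk / (lam - lamk)) :
    ∀ r : ℝ,
      (r < (lam * sk + lam * δ * lamk) / (lam - θ * lamk) →
          r * dk * (1 - lamk / lam) - dk * sk < 0 ∧
          r * dk * (1 - θ * lamk / lam) - dk * sk - dk * δ * lamk < 0) ∧
      ((lam * sk + lam * δ * lamk) / (lam - θ * lamk) ≤ r →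
          0 ≤ r * dk * (1 - θ * lamk / lam) - dk * sk - dk * δ * lamk ∧
          r * dk * (1 - lamk / lam) - dk * sk ≤
            r * dk * (1 - θ * lamk / lam) - dk * sk - dk * δ * lamk) :=
  type2_client_behavior_general dk sk lamk lam θ δ hd hθ1 hlk hlt htype2
end

section
/- Let K be a finite set of clients, each client k having attributes d_k > 0, s_k > 0, 0 < λ_k < λ, with constants 0 < θ < 1, δ > 0, and define ζ1(k) = λ·s_k/(λ − λ_k), ζ2(k) = (λ·s_k + λ·δ·λ_k)/(λ − θ·λ_k), ζ3 = λ·δ/(1 − θ), and the indicator set Z = ∪_{k∈K} {ζ1(k), ζ2(k), ζ3}. For r > 0, define the participating sets N_r^L = {k ∈ K : ζ1(k) ≤ ζ3 and ζ1(k) ≤ r < ζ3} and N_r^A = {k ∈ K : (ζ1(k) ≤ ζ3 and r ≥ ζ3) or (ζ3 < ζ1(k) and r ≥ ζ2(k))}, with N_r = N_r^L ∪ N_r^A, and when N_r ≠ ∅ set Λ(N_r) = Σ_{k∈N_r^L} (d_k/d(N_r))·(ψ/√(d_k/h) + λ_k) + Σ_{k∈N_r^A} (d_k/d(N_r))·(ψ/√(d_k/h)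 + θλ_k) where d(N_r) = Σ_{k∈N_r} d_k, and set R̃(N_r) = Σ_{k∈N_r^L} d_k·(1 − λ_k/λ) + Σ_{k∈N_r^A} d_k·(1 − θλ_k/λ). Let the server's cost be C(T, r) = γ1·φ^{hT}·Θ + (1 − φ^{hT})·γ1·κ1·Λ(N_r) + γ2·T·r·R̃(N_r), with γ1 > 0, γ2 > 0, 0 < φ < 1, h, T positive integers, κ1 > 0, ψ ≥ 0. Then for every r > 0 with r ∉ Z and N_r ≠ ∅, there exists r' ∈ Z with r' < r such that N_{r'}^L = N_r^L, N_{r'}^A = N_r^A, and C(T, r') < C(T, r). Consequently, for any fixed T, any r minimizing C(T, ·) over r with nonempty participation must belong to Z. -/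
/-!
Whether a client belongs to `N_r^L` or `N_r^A` is decided by comparing `r` with its indicators,
so the participating sets, and with them `Λ(N_r)` and `R̃(N_r)`, depend only on which points of
the finite set `Z` lie below `r`. Lowering `r ∉ Z` to the largest indicator `r'` below it (there
is one as soon as some client participates) therefore changes only the payment
`γ2·T·r·R̃(N_r)`, which is strictly increasing in `r` because `R̃(N_r) > 0`. Since indicators are
positive, a minimiser outside `Z` would be beaten by `r'`.
-/

open Finset

noncomputable section IMFL

variable {ι : Type*} [Fintype ι] [DecidableEq ι]

/-- Indicator ζ1(k) = λ·s_k/(λ − λ_k). -/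
def zeta1 (lam : ℝ) (s lk : ι → ℝ) (k : ι) : ℝ := lam * s k / (lam - lk k)

/-- Indicator ζ2(k) = (λ·s_k + λ·δ·λ_k)/(λ − θ·λ_k). -/
def zeta2 (lam θ δ : ℝ) (s lk : ι → ℝ) (k : ι) : ℝ :=
  (lam * s k + lam * δ * lk k) / (lam - θ * lk k)

/-- Indicator ζ3 = λ·δ/(1 − θ). -/
def zeta3 (lam θ δ : ℝ) : ℝ := lam * δ / (1 - θ)

/-- The set of all clients' indicators. -/
def indicatorSet (lam θ δ : ℝ) (s lk : ι → ℝ) : Set ℝ :=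
  ⋃ k : ι, {zeta1 lam s lk k, zeta2 lam θ δ s lk k, zeta3 lam θ δ}

/-- Participating clients using their local datasets under reward benchmark `r`. -/
def NL (lam θ δ : ℝ) (s lk : ι → ℝ) (r : ℝ) : Finset ι :=
  univ.filter fun k =>
    zeta1 lam s lk k ≤ zeta3 lam θ δ ∧ zeta1 lam s lk k ≤ r ∧ r < zeta3 lam θ δ

/-- Participating clients using their AIGC-enhanced datasets under reward benchmark `r`. -/
def NA (lam θ δ : ℝ) (s lk : ι → ℝ) (r : ℝ) : Finset ι :=
  univ.filter fun k =>
    (zeta1 lam s lk k ≤ zeta3 lam θ δ ∧ zeta3 lam θ δ ≤ r) ∨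
    (zeta3 lam θ δ < zeta1 lam s lk k ∧ zeta2 lam θ δ s lk k ≤ r)

/-- All participating clients under reward benchmark `r`. -/
def NP (lam θ δ : ℝ) (s lk : ι → ℝ) (r : ℝ) : Finset ι :=
  NL lam θ δ s lk r ∪ NA lam θ δ s lk r

/-- Training gradient error Λ(N_r) of the participating clients (with B_k = d_k/h). -/
def LamErr (lam θ δ ψ : ℝ) (h : ℕ) (d s lk : ι → ℝ) (r : ℝ) : ℝ :=
  (∑ k ∈ NL lam θ δ s lk r,
      (d k / ∑ j ∈ NP lam θ δ s lk r, d j) * (ψ / Real.sqrt (d k / h) + lk k)) +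
  ∑ k ∈ NA lam θ δ s lk r,
      (d k / ∑ j ∈ NP lam θ δ s lk r, d j) * (ψ / Real.sqrt (d k / h) + θ * lk k)

/-- Quality-discounted total data reward R̃(N_r) per unit reward per iteration. -/
def Rtil (lam θ δ : ℝ) (d s lk : ι → ℝ) (r : ℝ) : ℝ :=
  (∑ k ∈ NL lam θ δ s lk r, d k * (1 - lk k / lam)) +
  ∑ k ∈ NA lam θ δ s lk r, d k * (1 - θ * lk k / lam)

/-- Server's cost `C(T, r)`. -/
def serverCost (lam θ δ ψ γ1 γ2 φ Θ κ1 : ℝ) (h : ℕ) (d s lk : ι → ℝ) (T : ℕ) (r : ℝ) : ℝ :=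
  γ1 * φ ^ (h * T) * Θ + (1 - φ ^ (h * T)) * γ1 * κ1 * LamErr lam θ δ ψ h d s lk r +
    γ2 * T * r * Rtil lam θ δ d s lk r

theorem Set.Finite.exists_lt_forall_le_iff_le {α : Type*} [LinearOrder α] {Z : Set α}
    (hZ : Z.Finite) {r : α} (hr : r ∉ Z) (hbelow : ∃ z ∈ Z, z ≤ r) :
    ∃ r' ∈ Z, r' < r ∧ ∀ z ∈ Z, (z ≤ r' ↔ z ≤ r) := by
  have hlt : ∀ z ∈ Z, z ≤ r → z < r := fun z hz hzr => hzr.lt_of_ne (ne_of_mem_of_not_mem hz hr)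
  obtain ⟨z₀, hz₀, hz₀r⟩ := hbelow
  obtain ⟨r', ⟨hr'Z, hr'r⟩, hmax⟩ := Set.exists_max_image {z ∈ Z | z < r} id
    (hZ.subset fun _ hz => hz.1) ⟨z₀, hz₀, hlt z₀ hz₀ hz₀r⟩
  exact ⟨r', hr'Z, hr'r, fun z hz =>
    ⟨fun hzr' => hzr'.trans hr'r.le, fun hzr => hmax z ⟨hz, hlt z hz hzr⟩⟩⟩

variable {lam θ δ : ℝ} {s lk : ι → ℝ}

section IndicatorSet

omit [Fintype ι] [DecidableEq ι]

theorem zeta1_mem_indicatorSet (k : ι) : zeta1 lam s lk k ∈ indicatorSet lam θ δ s lk :=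
  Set.mem_iUnion.mpr ⟨k, by simp⟩

theorem zeta2_mem_indicatorSet (k : ι) : zeta2 lam θ δ s lk k ∈ indicatorSet lam θ δ s lk :=
  Set.mem_iUnion.mpr ⟨k, by simp⟩

theorem zeta3_mem_indicatorSet (k : ι) : zeta3 lam θ δ ∈ indicatorSet (ι := ι) lam θ δ s lk :=
  Set.mem_iUnion.mpr ⟨k, by simp⟩

theorem pos_of_mem_indicatorSet (hs : ∀ k, 0 < s k) (hlk : ∀ k, 0 < lk k)
    (hlam : ∀ k, lk k < lam) (hθ1 : θ < 1) (hδ : 0 < δ) {z : ℝ}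
    (hz : z ∈ indicatorSet lam θ δ s lk) : 0 < z := by
  obtain ⟨k, hk⟩ := Set.mem_iUnion.mp hz
  have hlam0 : 0 < lam := (hlk k).trans (hlam k)
  have hθlk : θ * lk k < lam := by nlinarith [hlk k, hlam k]
  rcases hk with rfl | rfl | rfl
  · exact div_pos (mul_pos hlam0 (hs k)) (sub_pos.mpr (hlam k))
  · exact div_pos (by have := hs k; have := hlk k; positivity) (sub_pos.mpr hθlk)
  · exact div_pos (mul_pos hlam0 hδ) (sub_pos.mpr hθ1)

end IndicatorSet

omit [DecidableEq ι] in
theorem indicatorSet_finite : (indicatorSet lam θ δ s lk).Finite :=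
  Set.finite_iUnion fun _ => by simp

theorem exists_indicator_le_of_mem_NP {r : ℝ} {k : ι} (hk : k ∈ NP lam θ δ s lk r) :
    ∃ z ∈ indicatorSet lam θ δ s lk, z ≤ r := by
  simp only [NP, NL, NA, mem_union, mem_filter, mem_univ, true_and] at hk
  rcases hk with ⟨-, h1, -⟩ | ⟨-, h3⟩ | ⟨-, h2⟩
  · exact ⟨_, zeta1_mem_indicatorSet k, h1⟩
  · exact ⟨_, zeta3_mem_indicatorSet k, h3⟩
  · exact ⟨_, zeta2_mem_indicatorSet k, h2⟩

section SameIndicatorsBelow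

variable {r r' : ℝ} (hrr' : ∀ z ∈ indicatorSet lam θ δ s lk, (z ≤ r' ↔ z ≤ r))
include hrr'
omit [DecidableEq ι]

theorem NL_eq_of_forall_indicator_le_iff : NL lam θ δ s lk r' = NL lam θ δ s lk r := by
  ext k
  have h3 := hrr' _ (zeta3_mem_indicatorSet k)
  simp only [NL, mem_filter, mem_univ, true_and, ← not_le, h3, hrr' _ (zeta1_mem_indicatorSet k)]

theorem NA_eq_of_forall_indicator_le_iff : NA lam θ δ s lk r' = NA lam θ δ s lk r := by
  ext k
  simp only [NA, mem_filter, mem_univ, true_and, hrr' _ (zeta3_mem_indicatorSet k),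
    hrr' _ (zeta2_mem_indicatorSet k)]

end SameIndicatorsBelow

theorem Rtil_pos {d : ι → ℝ} (hd : ∀ k, 0 < d k) (hlk : ∀ k, 0 < lk k)
    (hlam : ∀ k, lk k < lam) (hθ1 : θ < 1) {r : ℝ} (hne : (NP lam θ δ s lk r).Nonempty) :
    0 < Rtil lam θ δ d s lk r := by
  have hlocal : ∀ k, 0 < d k * (1 - lk k / lam) := fun k => by
    have hlam0 : 0 < lam := (hlk k).trans (hlam k)
    have : lk k / lam < 1 := (div_lt_one hlam0).mpr (hlam k)
    exact mul_pos (hd k) (by linarith)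
  have haigc : ∀ k, 0 < d k * (1 - θ * lk k / lam) := fun k => by
    have hlam0 : 0 < lam := (hlk k).trans (hlam k)
    have : θ * lk k / lam < 1 := (div_lt_one hlam0).mpr (by nlinarith [hlk k, hlam k])
    exact mul_pos (hd k) (by linarith)
  obtain ⟨k, hk⟩ := hne
  rw [Rtil]
  have hL := sum_nonneg fun k (_ : k ∈ NL lam θ δ s lk r) => (hlocal k).le
  have hA := sum_nonneg fun k (_ : k ∈ NA lam θ δ s lk r) => (haigc k).le
  rcases mem_union.mp hk with hkL | hkA
  · linarith [sum_pos' (fun k _ => (hlocal k).le) ⟨k, hkL, hlocal k⟩]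
  · linarith [sum_pos' (fun k _ => (haigc k).le) ⟨k, hkA, haigc k⟩]

theorem serverCost_lt_of_participation_eq {ψ γ1 γ2 φ Θ κ1 : ℝ} {h T : ℕ} {d : ι → ℝ}
    {r r' : ℝ} (hL : NL lam θ δ s lk r' = NL lam θ δ s lk r)
    (hA : NA lam θ δ s lk r' = NA lam θ δ s lk r) (hγ2 : 0 < γ2) (hT : 0 < T)
    (hR : 0 < Rtil lam θ δ d s lk r) (hr'r : r' < r) :
    serverCost lam θ δ ψ γ1 γ2 φ Θ κ1 h d s lk T r' <
      serverCost lam θ δ ψ γ1 γ2 φ Θ κ1 h d s lk T r := by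
  have hLam : LamErr lam θ δ ψ h d s lk r' = LamErr lam θ δ ψ h d s lk r := by
    simp only [LamErr, NP, hL, hA]
  have hRtil : Rtil lam θ δ d s lk r' = Rtil lam θ δ d s lk r := by
    simp only [Rtil, hL, hA]
  have hpay : γ2 * T * r' * Rtil lam θ δ d s lk r < γ2 * T * r * Rtil lam θ δ d s lk r := by
    gcongr
  simp only [serverCost, hLam, hRtil]
  linarith

theorem exists_indicator_lt_serverCost_lt {ψ γ1 γ2 φ Θ κ1 : ℝ} {h T : ℕ} {d : ι → ℝ}
    (hd : ∀ k, 0 < d k) (hlk : ∀ k, 0 < lk k) (hlam : ∀ k, lk k < lam) (hθ1 : θ < 1)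
    (hγ2 : 0 < γ2) (hT : 0 < T) {r : ℝ} (hrZ : r ∉ indicatorSet lam θ δ s lk)
    (hne : (NP lam θ δ s lk r).Nonempty) :
    ∃ r' ∈ indicatorSet lam θ δ s lk, r' < r ∧
      NL lam θ δ s lk r' = NL lam θ δ s lk r ∧
      NA lam θ δ s lk r' = NA lam θ δ s lk r ∧
      serverCost lam θ δ ψ γ1 γ2 φ Θ κ1 h d s lk T r' <
        serverCost lam θ δ ψ γ1 γ2 φ Θ κ1 h d s lk T r := by
  obtain ⟨r', hr'Z, hr'r, hsame⟩ := indicatorSet_finite.exists_lt_forall_le_iff_le hrZ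
    (exists_indicator_le_of_mem_NP hne.choose_spec)
  have hL := NL_eq_of_forall_indicator_le_iff hsame
  have hA := NA_eq_of_forall_indicator_le_iff hsame
  exact ⟨r', hr'Z, hr'r, hL, hA, serverCost_lt_of_participation_eq hL hA hγ2 hT
    (Rtil_pos hd hlk hlam hθ1 hne) hr'r⟩

theorem optimal_reward_in_indicator_set_general
    (d s lk : ι → ℝ) (lam θ δ γ1 γ2 φ Θ κ1 ψ : ℝ) (h T : ℕ)
    (hd : ∀ k, 0 < d k) (hs : ∀ k, 0 < s k) (hlk : ∀ k, 0 < lk k) (hlam : ∀ k, lk k < lam)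
    (hθ1 : θ < 1) (hδ : 0 < δ) (hγ2 : 0 < γ2) (hT : 0 < T) :
    (∀ r : ℝ, 0 < r → r ∉ indicatorSet lam θ δ s lk → (NP lam θ δ s lk r).Nonempty →
        ∃ r' ∈ indicatorSet lam θ δ s lk, r' < r ∧
          NL lam θ δ s lk r' = NL lam θ δ s lk r ∧
          NA lam θ δ s lk r' = NA lam θ δ s lk r ∧
          serverCost lam θ δ ψ γ1 γ2 φ Θ κ1 h d s lk T r' <
            serverCost lam θ δ ψ γ1 γ2 φ Θ κ1 h d s lk T r) ∧
      ∀ r : ℝ, 0 < r → (NP lam θ δ s lk r).Nonempty →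
        (∀ r'' : ℝ, 0 < r'' → (NP lam θ δ s lk r'').Nonempty →
          serverCost lam θ δ ψ γ1 γ2 φ Θ κ1 h d s lk T r ≤
            serverCost lam θ δ ψ γ1 γ2 φ Θ κ1 h d s lk T r'') →
        r ∈ indicatorSet lam θ δ s lk := by
  refine ⟨fun r _ hrZ hne => exists_indicator_lt_serverCost_lt hd hlk hlam hθ1 hγ2 hT hrZ hne,
    fun r _ hne hmin => ?_⟩
  by_contra hrZ
  obtain ⟨r', hr'Z, -, hL, hA, hlt⟩ :=
    exists_indicator_lt_serverCost_lt (ψ := ψ) (γ1 := γ1) (φ := φ) (Θ := Θ) (κ1 := κ1) (h := h)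
      hd hlk hlam hθ1 hγ2 hT hrZ hne
  have hne' : (NP lam θ δ s lk r').Nonempty := by rwa [NP, hL, hA]
  exact (hmin r' (pos_of_mem_indicatorSet hs hlk hlam hθ1 hδ hr'Z) hne').not_gt hlt

/-- Proposition 1: for any fixed `T`, any reward benchmark `r ∉ Z` with
nonempty participation is strictly improved by some indicator `r' ∈ Z` below it that keeps
the participating sets unchanged; consequently any cost-minimizing `r` with nonempty
participation belongs to the indicator set `Z`. -/
theorem optimal_reward_in_indicator_set
    (d s lk : ι → ℝ) (lam θ δ γ1 γ2 φ Θ κ1 ψ : ℝ) (h T : ℕ)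
    (hd : ∀ k, 0 < d k) (hs : ∀ k, 0 < s k) (hlk : ∀ k, 0 < lk k) (hlam : ∀ k, lk k < lam)
    (hθ0 : 0 < θ) (hθ1 : θ < 1) (hδ : 0 < δ) (hγ1 : 0 < γ1) (hγ2 : 0 < γ2)
    (hφ0 : 0 < φ) (hφ1 : φ < 1) (hh : 0 < h) (hT : 0 < T) (hκ : 0 < κ1) (hψ : 0 ≤ ψ) :
    (∀ r : ℝ, 0 < r → r ∉ indicatorSet lam θ δ s lk → (NP lam θ δ s lk r).Nonempty →
        ∃ r' ∈ indicatorSet lam θ δ s lk, r' < r ∧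
          NL lam θ δ s lk r' = NL lam θ δ s lk r ∧
          NA lam θ δ s lk r' = NA lam θ δ s lk r ∧
          serverCost lam θ δ ψ γ1 γ2 φ Θ κ1 h d s lk T r' <
            serverCost lam θ δ ψ γ1 γ2 φ Θ κ1 h d s lk T r) ∧
      ∀ r : ℝ, 0 < r → (NP lam θ δ s lk r).Nonempty →
        (∀ r'' : ℝ, 0 < r'' → (NP lam θ δ s lk r'').Nonempty →
          serverCost lam θ δ ψ γ1 γ2 φ Θ κ1 h d s lk T r ≤
            serverCost lam θ δ ψ γ1 γ2 φ Θ κ1 h d s lk T r'') →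
        r ∈ indicatorSet lam θ δ s lk :=
  optimal_reward_in_indicator_set_general d s lk lam θ δ γ1 γ2 φ Θ κ1 ψ h T hd hs hlk hlam hθ1 hδ
    hγ2 hT

end IMFL
end
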